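/- arXiv:1602.05906 — 2 statements merged into one kernel-verified Lean document; each statement's English description precedes it below -/
import Mathlib

section
/- Let B(u) = u²/(2a) + u²/(2b) with 0 < a < b and λ > 0. Define p(s) = ∫_{bs}^∞ λ e^{−λB(u)} du for s ≥ 0 and p(s) = ∫_{−as}^∞ λ e^{−λB(u)} du for s < 0. Then Σ_{s∈ℤ} s·p(s) = −Σ_{s>0} s ∫_{as}^{bs} λ e^{−λB(u)} du, and in particular this expectation is strictly negative. -/
/-!
Write `T c = ∫_c^∞ λ e^{-λB(u)} du`. The terms `s ≥ 0` of the series contribute `Σ n T(bn)` and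
the terms `s < 0` contribute `-Σ n T(an)`; since `T(an) - T(bn) = ∫_{an}^{bn} λ e^{-λB}`, the
difference is minus the stated series, and it is negative because `a < b` makes every summand
positive. Both series converge because `λB(u) = k u²` with `k > 0` and
`∫_c^∞ e^{-ku²} du ≤ e^{-kc²/2} √(2π/k)` for `c ≥ 0`.
-/

open MeasureTheory Set Real

theorem integral_Ici_exp_neg_mul_sq_le {k c : ℝ} (hk : 0 < k) (hc : 0 ≤ c) :
    ∫ u in Ici c, exp (-k * u ^ 2) ≤ exp (-(k / 2) * c ^ 2) * √(π / (k / 2)) := by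
  have hint : Integrable fun u : ℝ => exp (-(k / 2) * c ^ 2) * exp (-(k / 2) * u ^ 2) :=
    (integrable_exp_neg_mul_sq (by positivity)).const_mul _
  calc ∫ u in Ici c, exp (-k * u ^ 2)
      ≤ ∫ u in Ici c, exp (-(k / 2) * c ^ 2) * exp (-(k / 2) * u ^ 2) := by
        refine setIntegral_mono_on (integrable_exp_neg_mul_sq hk).integrableOn hint.integrableOn
          measurableSet_Ici fun u (hu : c ≤ u) => ?_
        have : c ^ 2 ≤ u ^ 2 := pow_le_pow_left₀ hc hu 2
        rw [← exp_add]
        gcongr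
        nlinarith
    _ ≤ ∫ u, exp (-(k / 2) * c ^ 2) * exp (-(k / 2) * u ^ 2) :=
        setIntegral_le_integral hint (.of_forall fun u => by positivity)
    _ = exp (-(k / 2) * c ^ 2) * √(π / (k / 2)) := by rw [integral_const_mul, integral_gaussian]

theorem summable_natCast_mul_integral_Ici_exp_neg_mul_sq {k c : ℝ} (hk : 0 < k) (hc : 0 < c) :
    Summable fun n : ℕ => (n : ℝ) * ∫ u in Ici (c * n), exp (-k * u ^ 2) := by
  refine ((summable_pow_mul_exp_neg_nat_mul 1 (by positivity : 0 < k / 2 * c ^ 2)).mul_left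
    √(π / (k / 2))).of_nonneg_of_le (fun n => by positivity) fun n => ?_
  have hn : (n : ℝ) ≤ (n : ℝ) ^ 2 := by
    rcases n.eq_zero_or_pos with rfl | hn
    · simp
    · nlinarith [(Nat.one_le_cast (α := ℝ)).2 hn]
  have hexp : -(k / 2) * (c * n) ^ 2 ≤ -(k / 2 * c ^ 2) * n := by
    nlinarith [mul_le_mul_of_nonneg_left hn (by positivity : 0 ≤ k / 2 * c ^ 2)]
  calc (n : ℝ) * ∫ u in Ici (c * n), exp (-k * u ^ 2)
      ≤ n * (exp (-(k / 2) * (c * n) ^ 2) * √(π / (k / 2))) := by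
        gcongr; exact integral_Ici_exp_neg_mul_sq_le hk (by positivity)
    _ ≤ n * (exp (-(k / 2 * c ^ 2) * n) * √(π / (k / 2))) := by gcongr
    _ = √(π / (k / 2)) * ((n : ℝ) ^ 1 * exp (-(k / 2 * c ^ 2) * n)) := by ring

theorem hasSum_intCast_mul_ite {T : ℝ → ℝ} {a b : ℝ}
    (ha : Summable fun n : ℕ => (n : ℝ) * T (a * n))
    (hb : Summable fun n : ℕ => (n : ℝ) * T (b * n)) :
    HasSum (fun s : ℤ => (s : ℝ) * if 0 ≤ s then T (b * s) else T (-(a * s)))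
      (∑' n : ℕ, (n : ℝ) * T (b * n) - ∑' n : ℕ, (n : ℝ) * T (a * n)) := by
  have hneg : ∀ n : ℕ,
      (((-(n + 1) : ℤ) : ℝ) * if 0 ≤ -((n : ℤ) + 1) then T (b * ((-(n + 1) : ℤ) : ℝ))
        else T (-(a * ((-(n + 1) : ℤ) : ℝ)))) = -(((n + 1 : ℕ) : ℝ) * T (a * (n + 1 : ℕ))) := by
    intro n
    rw [if_neg (by omega)]
    push_cast
    ring_nf
  rw [sub_eq_add_neg, ha.tsum_eq_zero_add, Nat.cast_zero, zero_mul, zero_add]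
  refine HasSum.of_nat_of_neg_add_one (by simpa using hb.hasSum) ?_
  simp only [hneg]
  exact ((summable_nat_add_iff 1).2 ha).hasSum.neg

section TailMoments

variable {g : ℝ → ℝ} {a b : ℝ}

theorem natCast_mul_integral_Ici_sub (hg : Integrable g) (n : ℕ) :
    (n : ℝ) * (∫ u in Ici (a * n), g u) - n * ∫ u in Ici (b * n), g u =
      n * ∫ u in (a * n)..(b * n), g u := by
  rw [← mul_sub, intervalIntegral.integral_Ici_sub_Ici' hg.integrableOn hg.integrableOn]

theorem tsum_natCast_mul_integral_Ici_sub (hg : Integrable g)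
    (ha : Summable fun n : ℕ => (n : ℝ) * ∫ u in Ici (a * n), g u)
    (hb : Summable fun n : ℕ => (n : ℝ) * ∫ u in Ici (b * n), g u) :
    (∑' n : ℕ, (n : ℝ) * ∫ u in Ici (b * n), g u) - ∑' n : ℕ, (n : ℝ) * ∫ u in Ici (a * n), g u =
      -∑' n : ℕ, ((n : ℝ) + 1) * ∫ u in (a * ((n : ℝ) + 1))..(b * ((n : ℝ) + 1)), g u := by
  rw [← neg_sub, ← ha.tsum_sub hb, (ha.sub hb).tsum_eq_zero_add]
  simp only [natCast_mul_integral_Ici_sub hg]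
  push_cast
  simp

theorem tsum_natCast_mul_integral_Ici_lt (hg : Integrable g) (hpos : ∀ u, 0 < g u) (hab : a < b)
    (ha : Summable fun n : ℕ => (n : ℝ) * ∫ u in Ici (a * n), g u)
    (hb : Summable fun n : ℕ => (n : ℝ) * ∫ u in Ici (b * n), g u) :
    ∑' n : ℕ, (n : ℝ) * ∫ u in Ici (b * n), g u < ∑' n : ℕ, (n : ℝ) * ∫ u in Ici (a * n), g u := by
  refine hb.tsum_lt_tsum (i := 1) (fun n => ?_) ?_ ha
  · rw [← sub_nonneg, natCast_mul_integral_Ici_sub hg]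
    exact mul_nonneg n.cast_nonneg <| intervalIntegral.integral_nonneg
      (by gcongr) fun u _ => (hpos u).le
  · rw [← sub_pos, natCast_mul_integral_Ici_sub hg, Nat.cast_one, one_mul]
    exact intervalIntegral.intervalIntegral_pos_of_pos hg.intervalIntegrable hpos (by linarith)

end TailMoments

/-- Bias of the minimum location for the asymmetric trend: with
`B(u) = u²/(2a) + u²/(2b)` and `p` the unnormalized location distribution,
`Σ_s s·p(s) = -Σ_{s>0} s ∫_{as}^{bs} λ e^{-λB(u)} du < 0`. -/
theorem stmt14 (a b lam : ℝ) (ha : 0 < a) (hab : a < b) (hlam : 0 < lam)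
    (B : ℝ → ℝ) (hB : ∀ u, B u = u ^ 2 / (2 * a) + u ^ 2 / (2 * b))
    (p : ℤ → ℝ)
    (hp : ∀ s : ℤ, p s =
      if 0 ≤ s then ∫ u in Set.Ici (b * (s : ℝ)), lam * Real.exp (-lam * B u)
      else ∫ u in Set.Ici (-(a * (s : ℝ))), lam * Real.exp (-lam * B u)) :
    Summable (fun s : ℤ => (s : ℝ) * p s) ∧
    (∑' s : ℤ, (s : ℝ) * p s =
      -∑' n : ℕ, ((n : ℝ) + 1) *
        ∫ u in (a * ((n : ℝ) + 1))..(b * ((n : ℝ) + 1)), lam * Real.exp (-lam * B u)) ∧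
    (∑' s : ℤ, (s : ℝ) * p s < 0) := by
  set g : ℝ → ℝ := fun u => lam * exp (-lam * B u)
  set k := lam * (1 / (2 * a) + 1 / (2 * b))
  have hb : 0 < b := ha.trans hab
  have hk : 0 < k := by positivity
  have hg : g = fun u => lam * exp (-k * u ^ 2) := by
    funext u
    simp only [g, k, hB]
    ring_nf
  have hg_int : Integrable g := hg ▸ (integrable_exp_neg_mul_sq hk).const_mul lam
  have hg_pos : ∀ u, 0 < g u := fun u => by rw [hg]; positivity
  have hsummable : ∀ c : ℝ, 0 < c → Summable fun n : ℕ => (n : ℝ) * ∫ u in Ici (c * n), g u := by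
    intro c hc
    simp only [hg, integral_const_mul, mul_left_comm _ lam]
    exact (summable_natCast_mul_integral_Ici_exp_neg_mul_sq hk hc).mul_left lam
  have hSa := hsummable a ha
  have hSb := hsummable b hb
  have hsum : HasSum (fun s : ℤ => (s : ℝ) * p s)
      ((∑' n : ℕ, (n : ℝ) * ∫ u in Ici (b * n), g u) - ∑' n : ℕ, (n : ℝ) * ∫ u in Ici (a * n), g u) := by
    simp only [hp]
    exact hasSum_intCast_mul_ite (T := fun c => ∫ u in Ici c, g u) hSa hSb
  refine ⟨hsum.summable, ?_, ?_⟩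
  · rw [hsum.tsum_eq, tsum_natCast_mul_integral_Ici_sub hg_int hSa hSb]
  · rw [hsum.tsum_eq, sub_neg]
    exact tsum_natCast_mul_integral_Ici_lt hg_int hg_pos hab hSa hSb
end

section
/- Let (Y_t)_{t∈I} be independent shifted exponentials with locations T_t and common rate λ > 0, and let B(u) = Σ_{t: T_t ≤ u}(u − T_t). Then the probabilities P(τ = s) = ∫_{T_s}^∞ λ e^{−λB(u)} du sum to 1 over s ∈ I, i.e., Σ_{s∈I} ∫_{T_s}^∞ λ e^{−λB(u)} du = 1. -/
open scoped Classical

open MeasureTheory Set Filter Topology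
open scoped Finset

/-!
Off the finitely many breakpoints `T t`, the function `B` is differentiable with slope
`N u = #{t | T t ≤ u}`, so `N u * λ e^{-λ B u}` is the derivative of `-e^{-λ B u}`. Summing the
integrals over `s` turns `Σ_s 1_{u ≥ T s}` into `N u`, and the fundamental theorem of calculus
on the whole line (with a countable exceptional set) gives `0 - (-1) = 1`, because `B = 0` far
to the left and `B → ∞` to the right.
-/

theorem integral_eq_of_hasDerivAt_off_countable_of_tendsto {E : Type*} [NormedAddCommGroup E]
    [NormedSpace ℝ E] [CompleteSpace E] {f f' : ℝ → E} {s : Set ℝ} {m n : E}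
    (hs : s.Countable) (hc : Continuous f) (hd : ∀ x ∉ s, HasDerivAt f (f' x) x)
    (hf' : Integrable f') (hbot : Tendsto f atBot (𝓝 m)) (htop : Tendsto f atTop (𝓝 n)) :
    ∫ x, f' x = n - m := by
  have hftc : ∀ i, ∫ x in -i..i, f' x = f i - f (-i) := fun i =>
    integral_eq_of_hasDerivAt_off_countable f f' hs hc.continuousOn (fun x hx => hd x hx.2)
      hf'.intervalIntegrable
  refine tendsto_nhds_unique (intervalIntegral_tendsto_integral hf' tendsto_neg_atTop_atBot
    tendsto_id) ?_
  simp only [id, hftc]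
  exact htop.sub (hbot.comp tendsto_neg_atTop_atBot)

theorem Finset.sum_indicator_Ici {ι M : Type*} [AddCommMonoid M] (s : Finset ι) (T : ι → ℝ)
    (f : ℝ → M) (u : ℝ) :
    ∑ i ∈ s, (Set.Ici (T i)).indicator f u = #{i ∈ s | T i ≤ u} • f u := by
  simp only [indicator_apply, ← Finset.sum_filter, Finset.sum_const, Set.mem_Ici]

def hingeSum {ι : Type*} [Fintype ι] (T : ι → ℝ) (u : ℝ) : ℝ := ∑ t, max (u - T t) 0

section
variable {ι : Type*} [Fintype ι] (T : ι → ℝ)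

theorem sum_filter_le_sub_eq_hingeSum (u : ℝ) :
    ∑ t ∈ Finset.univ.filter (fun t => T t ≤ u), (u - T t) = hingeSum T u := by
  rw [Finset.sum_filter, hingeSum]
  refine Finset.sum_congr rfl fun t _ => ?_
  split_ifs with h
  · exact (max_eq_left (sub_nonneg.2 h)).symm
  · exact (max_eq_right (sub_nonpos.2 (not_le.1 h).le)).symm

@[fun_prop]
theorem continuous_hingeSum : Continuous (hingeSum T) := by
  unfold hingeSum; fun_prop

theorem hingeSum_eq_zero {u : ℝ} (hu : ∀ t, u ≤ T t) : hingeSum T u = 0 :=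
  Finset.sum_eq_zero fun t _ => max_eq_right (sub_nonpos.2 (hu t))

theorem sub_le_hingeSum (t : ι) (u : ℝ) : u - T t ≤ hingeSum T u :=
  (le_max_left _ _).trans <| Finset.single_le_sum (f := fun t => max (u - T t) 0)
    (fun _ _ => le_max_right _ _) (Finset.mem_univ t)

theorem tendsto_hingeSum_atTop [Nonempty ι] : Tendsto (hingeSum T) atTop atTop := by
  obtain ⟨t⟩ := ‹Nonempty ι›
  exact tendsto_atTop_mono (sub_le_hingeSum T t) (tendsto_atTop_add_const_right _ _ tendsto_id)

theorem eventually_hingeSum_atBot : ∀ᶠ u in atBot, hingeSum T u = 0 := by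
  filter_upwards [eventually_all.2 fun t => eventually_le_atBot (T t)] with u hu
  exact hingeSum_eq_zero T hu

theorem hasDerivAt_hingeSum {x : ℝ} (hx : ∀ t, T t ≠ x) :
    HasDerivAt (hingeSum T) #{t | T t ≤ x} x := by
  have hslope : ∀ t, HasDerivAt (fun u => max (u - T t) 0) (if T t ≤ x then 1 else 0) x := by
    intro t
    rcases (hx t).lt_or_gt with h | h
    · rw [if_pos h.le]
      refine ((hasDerivAt_id x).sub_const (T t)).congr_of_eventuallyEq ?_
      filter_upwards [Ioi_mem_nhds h] with u hu
      exact max_eq_left (sub_nonneg.2 (le_of_lt hu))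
    · rw [if_neg (not_le.2 h)]
      refine (hasDerivAt_const x (0 : ℝ)).congr_of_eventuallyEq ?_
      filter_upwards [Iio_mem_nhds h] with u hu
      exact max_eq_right (sub_nonpos.2 (le_of_lt hu))
  have hsum := HasDerivAt.fun_sum (u := Finset.univ) fun t _ => hslope t
  rwa [Finset.sum_boole] at hsum

theorem hasDerivAt_neg_exp_neg_mul_hingeSum (lam : ℝ) {x : ℝ} (hx : ∀ t, T t ≠ x) :
    HasDerivAt (fun u => -Real.exp (-lam * hingeSum T u))
      (#{t | T t ≤ x} * (lam * Real.exp (-lam * hingeSum T x))) x := by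
  refine (((hasDerivAt_hingeSum T hx).const_mul (-lam)).exp.fun_neg).congr_deriv ?_
  ring

theorem tendsto_neg_exp_neg_mul_hingeSum_atBot (lam : ℝ) :
    Tendsto (fun u => -Real.exp (-lam * hingeSum T u)) atBot (𝓝 (-1)) :=
  tendsto_const_nhds.congr' <| (eventually_hingeSum_atBot T).mono fun u hu => by simp [hu]

theorem tendsto_neg_exp_neg_mul_hingeSum_atTop [Nonempty ι] {lam : ℝ} (hlam : 0 < lam) :
    Tendsto (fun u => -Real.exp (-lam * hingeSum T u)) atTop (𝓝 0) := by
  have h := Real.tendsto_exp_atBot.comp <|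
    tendsto_neg_atTop_atBot.comp ((tendsto_hingeSum_atTop T).const_mul_atTop hlam)
  simpa [Function.comp_def] using h.neg

theorem integrableOn_Ici_exp_neg_mul_hingeSum {lam : ℝ} (hlam : 0 < lam) (t : ι) :
    IntegrableOn (fun u => lam * Real.exp (-lam * hingeSum T u)) (Ici (T t)) := by
  have hexp : IntegrableOn (fun u => lam * Real.exp (lam * T t) * Real.exp (-lam * u))
      (Ici (T t)) :=
    (integrableOn_Ici_iff_integrableOn_Ioi).2 <| (exp_neg_integrableOn_Ioi (T t) hlam).const_mul _
  refine hexp.mono' (by fun_prop : Continuous _).aestronglyMeasurable (ae_of_all _ fun u => ?_)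
  rw [Real.norm_eq_abs, abs_of_pos (by positivity), mul_assoc, ← Real.exp_add]
  have := mul_le_mul_of_nonneg_left (sub_le_hingeSum T t u) hlam.le
  gcongr
  linarith

end

/-- The minimum-location probabilities of the shifted exponential model sum to one:
`Σ_s ∫_{T s}^∞ λ e^{-λ B(u)} du = 1` where `B(u) = Σ_{t : T t ≤ u} (u - T t)`. -/
theorem stmt17 {I : Type*} [Fintype I] [Nonempty I] (T : I → ℝ) (lam : ℝ) (hlam : 0 < lam)
    (B : ℝ → ℝ)
    (hB : ∀ u, B u = ∑ t ∈ Finset.univ.filter (fun t => T t ≤ u), (u - T t)) :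
    ∑ s : I, ∫ u in Set.Ici (T s), lam * Real.exp (-lam * B u) = 1 := by
  obtain rfl : B = hingeSum T := funext fun u => (hB u).trans (sum_filter_le_sub_eq_hingeSum T u)
  have hf := integrableOn_Ici_exp_neg_mul_hingeSum T hlam
  have hind (s : I) := (hf s).integrable_indicator measurableSet_Ici
  have hdensity : Integrable fun u => #{t | T t ≤ u} * (lam * Real.exp (-lam * hingeSum T u)) :=
    (integrable_finsetSum Finset.univ fun s _ => hind s).congr <| ae_of_all _ fun u => by
      simp [Finset.sum_indicator_Ici]
  calc ∑ s, ∫ u in Ici (T s), lam * Real.exp (-lam * hingeSum T u)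
      = ∫ u, ∑ s, (Ici (T s)).indicator (fun u => lam * Real.exp (-lam * hingeSum T u)) u := by
        simp_rw [integral_finsetSum _ fun s _ => hind s, integral_indicator measurableSet_Ici]
    _ = ∫ u, #{t | T t ≤ u} * (lam * Real.exp (-lam * hingeSum T u)) := by
        simp_rw [Finset.sum_indicator_Ici, nsmul_eq_mul]
    _ = 0 - (-1) :=
        integral_eq_of_hasDerivAt_off_countable_of_tendsto (finite_range T).countable
          (by fun_prop)
          (fun x hx => hasDerivAt_neg_exp_neg_mul_hingeSum T lam fun t ht => hx ⟨t, ht⟩)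
          hdensity (tendsto_neg_exp_neg_mul_hingeSum_atBot T lam)
          (tendsto_neg_exp_neg_mul_hingeSum_atTop T hlam)
    _ = 1 := by ring
end
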